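/- Let k ≥ 2 and let C be an [n,k]_{q^m/q} one-weight rank-metric code (all nonzero codewords have the same rank d). Then the effective length dim_{F_q}(σ^rk(C)) of C equals km and d = m. -/

import Mathlib

/-!
For `x ∈ Kⁿ` let `u_x : C → L` be the `L`-linear functional `v ↦ ∑ xᵢ vᵢ`, and let `V` be the
`K`-space of all `u_x`. Since `σ^rk(v)` is the annihilator of `{x | u_x v = 0}` in the dual of `Kⁿ`,
the effective length of `C` is `a = dim_K V`, and for `v ≠ 0` the map `u ↦ u v` on `V` has rank
`rk(v) = d`. Counting the pairs `(u, v) ∈ V × C` with `u v = 0` once by `u` (a nonzero `u` vanishes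
on an `L`-hyperplane) and once by `v` gives, with `Q = q^m`,
`Q^k + (q^a - 1) Q^(k-1) = q^a + (Q^k - 1) q^(a-d)`, and for `k ≥ 2`, `1 ≤ d ≤ m` this forces
`d = m` and `a = km`.
-/

open Module Submodule

/-- The rank support of a vector `v ∈ L^n` over the subfield `K`: the `K`-span of the
rows of the expansion matrix, i.e. the space of all `(φ (v 1), ..., φ (v n))` for
`K`-linear functionals `φ : L → K`. -/
noncomputable def rkSupport (K : Type) {L : Type} [Field K] [Field L] [Algebra K L]
    {n : ℕ} (v : Fin n → L) : Submodule K (Fin n → K) :=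
  LinearMap.range (LinearMap.pi (fun i => LinearMap.applyₗ (v i) :
    Fin n → Module.Dual K L →ₗ[K] K))

theorem natCard_ker_eq_pow {K V W : Type} [Field K] [Finite K] [AddCommGroup V] [Module K V]
    [FiniteDimensional K V] [AddCommGroup W] [Module K W] (f : V →ₗ[K] W) :
    Nat.card (LinearMap.ker f) = Nat.card K ^ (finrank K V - finrank K (LinearMap.range f)) := by
  rw [Module.natCard_eq_pow_finrank (K := K), ← LinearMap.finrank_range_add_finrank_ker f,
    Nat.add_sub_cancel_left]

theorem Fintype.sum_eq_add_card_mul_of_ne_zero {V : Type} [Fintype V] [DecidableEq V] [Zero V]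
    (f : V → ℕ) {c : ℕ} (hf : ∀ v, v ≠ 0 → f v = c) :
    ∑ v, f v = f 0 + (Fintype.card V - 1) * c := by
  rw [Fintype.sum_eq_add_sum_compl 0, Finset.sum_congr rfl fun v hv => hf v (by simpa using hv),
    Finset.sum_const, Finset.card_compl, Finset.card_singleton, smul_eq_mul]

theorem Fintype.sum_natCard_subtype_comm {α β : Type} [Fintype α] [Fintype β] (r : α → β → Prop) :
    ∑ a, Nat.card {b // r a b} = ∑ b, Nat.card {a // r a b} := by
  classical
  simp only [Nat.card_eq_fintype_card, Fintype.card_subtype, Finset.card_filter]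
  exact Finset.sum_comm

theorem eq_and_eq_of_mul_sub_eq {R M B D : ℤ} (hR : 2 ≤ R) (hB : 1 ≤ B) (hD : 2 ≤ D)
    (hDM : D = M ∨ 2 * D ≤ M) (h : R * (M - 1) - B * (D - 1) = R * B * (M - D)) :
    D = M ∧ R = B := by
  have h2B : 2 ≤ B := by
    by_contra! hB1
    have : (R - 1) * (D - 1) = 0 := by rw [show B = 1 by omega] at h; linear_combination h
    rcases mul_eq_zero.mp this with h | h <;> linarith
  -- for `2D ≤ M` the right side is at least `2R(M - D) ≥ RM`, more than the left side
  obtain rfl : D = M := hDM.resolve_right fun h2DM => by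
    have hRMD : 0 ≤ R * (M - D) := mul_nonneg (by linarith) (by linarith)
    nlinarith [mul_le_mul_of_nonneg_right h2B hRMD,
      mul_nonneg (by linarith : 0 ≤ R) (by linarith : 0 ≤ M - 2 * D),
      mul_nonneg (by linarith : 0 ≤ B) (by linarith : 0 ≤ D - 1)]
  have : (R - B) * (D - 1) = 0 := by linear_combination h
  exact ⟨rfl, by rcases mul_eq_zero.mp this with h | h <;> linarith⟩

theorem eq_of_card_identity {q m k a d : ℕ} (hq : 2 ≤ q) (hk : 2 ≤ k) (hd : 1 ≤ d) (hdm : d ≤ m)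
    (hda : d ≤ a)
    (h : (q ^ m) ^ k + (q ^ a - 1) * (q ^ m) ^ (k - 1) = q ^ a + ((q ^ m) ^ k - 1) * q ^ (a - d)) :
    a = m * k ∧ d = m := by
  obtain ⟨b, rfl⟩ := Nat.exists_eq_add_of_le hda
  obtain ⟨j, rfl⟩ := Nat.exists_eq_add_of_le' (by omega : 1 ≤ k)
  have hq1 : 1 ≤ q := by omega
  have two_le_pow : ∀ e, e ≠ 0 → 2 ≤ q ^ e := fun e he => hq.trans (Nat.le_self_pow he q)
  have hDM : q ^ d = q ^ m ∨ 2 * q ^ d ≤ q ^ m := by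
    rcases hdm.eq_or_lt with rfl | hlt
    · exact .inl rfl
    · exact .inr <| calc 2 * q ^ d ≤ q ^ (d + 1) := by rw [pow_succ']; gcongr
        _ ≤ q ^ m := Nat.pow_le_pow_right hq1 hlt
  zify [Nat.one_le_pow _ _ (by omega : 0 < q), Nat.one_le_pow _ _ (by positivity : 0 < q ^ m)] at h
  simp only [Nat.add_sub_cancel_left, Nat.add_sub_cancel, pow_succ, pow_add] at h
  obtain ⟨hD, hR⟩ := eq_and_eq_of_mul_sub_eq (R := ((q : ℤ) ^ m) ^ j) (M := (q : ℤ) ^ m)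
    (B := (q : ℤ) ^ b) (D := (q : ℤ) ^ d)
    (by rw [← pow_mul]; exact_mod_cast two_le_pow _ (Nat.mul_ne_zero (by omega) (by omega)))
    (one_le_pow₀ (by exact_mod_cast hq1)) (by exact_mod_cast two_le_pow d (by omega))
    (by exact_mod_cast hDM) (by linear_combination h)
  obtain rfl : d = m := Nat.pow_right_injective hq (by exact_mod_cast hD)
  have hb : b = d * j := Nat.pow_right_injective hq <| show q ^ b = q ^ (d * j) by
    rw [pow_mul]; exact_mod_cast hR.symm
  exact ⟨by rw [hb]; ring, rfl⟩

section DoubleCounting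

variable {K L E : Type} [Field K] [Field L] [Algebra K L] [Fintype K] [Fintype L]
  [AddCommGroup E] [Module L E] [FiniteDimensional L E]

theorem card_identity_of_constant_rank (V : Submodule K (Dual L E)) {d : ℕ}
    (hV : ∀ v : E, v ≠ 0 →
      finrank K (LinearMap.range ((Dual.eval L E v).restrictScalars K ∘ₗ V.subtype)) = d) :
    Nat.card L ^ finrank L E + (Nat.card K ^ finrank K V - 1) * Nat.card L ^ (finrank L E - 1) =
      Nat.card K ^ finrank K V + (Nat.card L ^ finrank L E - 1) *
        Nat.card K ^ (finrank K V - d) := by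
  classical
  have : Finite E := Module.finite_of_finite L
  have : Finite (Dual L E) := Module.finite_of_finite L
  have : FiniteDimensional K (Dual L E) := .of_finite
  have := Fintype.ofFinite E
  have := Fintype.ofFinite V
  have hcardE : Fintype.card E = Nat.card L ^ finrank L E := by
    rw [Fintype.card_eq_nat_card, Module.natCard_eq_pow_finrank (K := L)]
  have hcardV : Fintype.card V = Nat.card K ^ finrank K V := by
    rw [Fintype.card_eq_nat_card, Module.natCard_eq_pow_finrank (K := K)]
  have hkerV : ∀ u : V, u ≠ 0 →
      Nat.card {v : E // (u : Dual L E) v = 0} = Nat.card L ^ (finrank L E - 1) := by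
    intro u hu
    have hu' : (u : Dual L E) ≠ 0 := by simpa using hu
    refine (natCard_ker_eq_pow (u : Dual L E)).trans ?_
    rw [Module.Dual.range_eq_top_of_ne_zero hu', finrank_top, finrank_self]
  have hkerE : ∀ v : E, v ≠ 0 →
      Nat.card {u : V // (u : Dual L E) v = 0} = Nat.card K ^ (finrank K V - d) := by
    intro v hv
    rw [← hV v hv]
    exact natCard_ker_eq_pow (K := K) (V := V) ((Dual.eval L E v).restrictScalars K ∘ₗ V.subtype)
  have hcount := Fintype.sum_natCard_subtype_comm fun (u : V) (v : E) => (u : Dual L E) v = 0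
  rw [Fintype.sum_eq_add_card_mul_of_ne_zero _ hkerV,
    Fintype.sum_eq_add_card_mul_of_ne_zero _ hkerE, hcardE, hcardV] at hcount
  simpa [Nat.card_eq_fintype_card, hcardE, hcardV] using hcount

end DoubleCounting

section RankSupport

variable {K L : Type} [Field K] [Field L] [Algebra K L] {n : ℕ}

theorem rkSupport_eq_map_range_dualMap (c : Fin n → L) :
    rkSupport K c = (LinearMap.range (Fintype.linearCombination K c).dualMap).map
      (piEquiv (Fin n) K K).symm.toLinearMap := by
  rw [rkSupport, ← LinearMap.range_comp]
  congr 1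
  ext φ i
  simp [piEquiv, Fintype.linearCombination_apply, Pi.single_apply]

theorem finrank_rkSupport (c : Fin n → L) :
    finrank K (rkSupport K c) = finrank K (span K (Set.range c)) := by
  rw [rkSupport_eq_map_range_dualMap, LinearEquiv.finrank_map_eq,
    LinearMap.finrank_range_dualMap_eq_finrank_range, Fintype.range_linearCombination]

variable [FiniteDimensional K L]

theorem finrank_rkSupport_le (c : Fin n → L) : finrank K (rkSupport K c) ≤ finrank K L :=
  finrank_rkSupport (K := K) c ▸ Submodule.finrank_le _

theorem finrank_rkSupport_pos {c : Fin n → L} (hc : c ≠ 0) : 0 < finrank K (rkSupport K c) := by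
  rw [finrank_rkSupport, Nat.pos_iff_ne_zero, Ne, Submodule.finrank_eq_zero, span_eq_bot]
  exact fun h => hc (funext fun i => h _ ⟨i, rfl⟩)

end RankSupport

section EffectiveLength

variable {K L : Type} [Field K] [Field L] [Algebra K L] {n : ℕ}

variable (K) in
noncomputable def dotFunctional (C : Submodule L (Fin n → L)) : (Fin n → K) →ₗ[K] Dual L C :=
  Fintype.linearCombination K fun i => (LinearMap.proj i).comp C.subtype

theorem dotFunctional_apply (C : Submodule L (Fin n → L)) (x : Fin n → K) (v : C) :
    dotFunctional K C x v = Fintype.linearCombination K (v : Fin n → L) x := by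
  simp [dotFunctional, Fintype.linearCombination_apply]

theorem range_eval_comp_subtype_range_dotFunctional (C : Submodule L (Fin n → L)) (v : C) :
    LinearMap.range ((Dual.eval L C v).restrictScalars K ∘ₗ
      (LinearMap.range (dotFunctional K C)).subtype) = span K (Set.range (v : Fin n → L)) := by
  rw [LinearMap.range_comp, range_subtype, ← LinearMap.range_comp,
    ← Fintype.range_linearCombination]
  congr 1
  ext x
  simp [dotFunctional_apply]

theorem ker_dotFunctional (C : Submodule L (Fin n → L)) :
    LinearMap.ker (dotFunctional K C) =
      ⨅ v : C, LinearMap.ker (Fintype.linearCombination K (v : Fin n → L)) := by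
  ext x
  simp only [LinearMap.mem_ker, mem_iInf, ← dotFunctional_apply]
  exact ⟨fun h v => by rw [h]; rfl, fun h => LinearMap.ext h⟩

theorem finrank_iSup_rkSupport [Finite L] (C : Submodule L (Fin n → L)) :
    finrank K ↥(⨆ v ∈ C, rkSupport K v) = finrank K (LinearMap.range (dotFunctional K C)) := by
  have : Finite C := Module.finite_of_finite L
  have hsup : (⨆ v ∈ C, rkSupport K v) =
      (LinearMap.range (dotFunctional K C).dualMap).map (piEquiv (Fin n) K K).symm.toLinearMap := by
    simp_rw [iSup_subtype', rkSupport_eq_map_range_dualMap, ← Submodule.map_iSup,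
      LinearMap.range_dualMap_eq_dualAnnihilator_ker, ker_dotFunctional,
      Subspace.dualAnnihilator_iInf_eq]
  rw [hsup, LinearEquiv.finrank_map_eq, LinearMap.finrank_range_dualMap_eq_finrank_range]

end EffectiveLength

theorem stmt_9 {K L : Type} [Field K] [Field L] [Algebra K L] [Fintype K] [Fintype L]
    {n k m d : ℕ} (hm : Module.finrank K L = m)
    (C : Submodule L (Fin n → L)) (hk : Module.finrank L C = k) (hk2 : 2 ≤ k)
    (hone : ∀ c ∈ C, c ≠ 0 → Module.finrank K (rkSupport K c) = d) :
    Module.finrank K ↥(⨆ v ∈ C, rkSupport K v) = k * m ∧ d = m := by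
  have : FiniteDimensional K L := .of_finite
  set V := LinearMap.range (dotFunctional K C)
  have hrank : ∀ v : C, v ≠ 0 →
      finrank K (LinearMap.range ((Dual.eval L C v).restrictScalars K ∘ₗ V.subtype)) = d := by
    intro v hv
    rw [range_eval_comp_subtype_range_dotFunctional, ← finrank_rkSupport,
      hone v v.2 (by simpa using hv)]
  obtain ⟨c, hcC, hc⟩ := exists_mem_ne_zero_of_ne_bot fun h : C = ⊥ => by
    rw [h, finrank_bot] at hk; omega
  have hd : 1 ≤ d := hone c hcC hc ▸ finrank_rkSupport_pos hc
  have hdm : d ≤ m := hone c hcC hc ▸ hm ▸ finrank_rkSupport_le c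
  have hda : d ≤ finrank K V := hrank ⟨c, hcC⟩ (by simpa using hc) ▸ LinearMap.finrank_range_le _
  have hcount := card_identity_of_constant_rank V hrank
  rw [hk, Module.natCard_eq_pow_finrank (K := K) (V := L), hm] at hcount
  obtain ⟨hdimV, rfl⟩ := eq_of_card_identity Finite.one_lt_card hk2 hd hdm hda hcount
  exact ⟨by rw [finrank_iSup_rkSupport, hdimV, mul_comm], rfl⟩
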